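/- If A is a critical independent set of a graph G and X = A ∪ N(A), then the induced subgraph G[X] is a König-Egerváry graph with α(G[X]) = |A| and μ(G[X]) = |N(A)|. -/

import Mathlib

open SimpleGraph

variable {V : Type*}

/-- A set of vertices is independent: no two of its vertices are adjacent. -/
def IsIndep (G : SimpleGraph V) (s : Set V) : Prop :=
  s.Pairwise fun a b => ¬ G.Adj a b

/-- The independence number α(G). -/
noncomputable def alphaNum (G : SimpleGraph V) : ℕ :=
  sSup {n | ∃ s : Set V, IsIndep G s ∧ s.ncard = n}

/-- The matching number μ(G). -/
noncomputable def muNum (G : SimpleGraph V) : ℕ :=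
  sSup {n | ∃ M : SimpleGraph.Subgraph G, M.IsMatching ∧ M.edgeSet.ncard = n}

/-- The neighborhood N(A) of a set of vertices. -/
def nbhd (G : SimpleGraph V) (A : Set V) : Set V := {v | ∃ a ∈ A, G.Adj a v}

/-- The difference d(A) = |A| - |N(A)| of a set of vertices. -/
noncomputable def diffSet (G : SimpleGraph V) (A : Set V) : ℤ :=
  (A.ncard : ℤ) - (nbhd G A).ncard

/-- The critical difference d(G). -/
noncomputable def critDiff (G : SimpleGraph V) : ℤ :=
  sSup {d | ∃ I : Set V, IsIndep G I ∧ diffSet G I = d}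

/-- A critical independent set: an independent set attaining the critical difference. -/
def IsCriticalIndep (G : SimpleGraph V) (A : Set V) : Prop :=
  IsIndep G A ∧ diffSet G A = critDiff G

/-- ker(G): the intersection of all critical independent sets. -/
noncomputable def kerSet (G : SimpleGraph V) : Set V :=
  ⋂₀ {A | IsCriticalIndep G A}

/-- A maximum independent set. -/
noncomputable def IsMaxIndep (G : SimpleGraph V) (S : Set V) : Prop :=
  IsIndep G S ∧ S.ncard = alphaNum G

/-- core(G): the intersection of all maximum independent sets. -/
noncomputable def coreSet (G : SimpleGraph V) : Set V :=
  ⋂₀ {S | IsMaxIndep G S}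

/-- A König–Egerváry graph: α(G) + μ(G) = n(G). -/
def KonigEgervary (G : SimpleGraph V) : Prop :=
  alphaNum G + muNum G = Nat.card V

/-!
Inside `G[A ∪ N(A)]` the set `A` is still independent, so `α ≥ |A|`. Criticality of `A` gives
Hall's condition for `N(A)` towards `A`: for `T ⊆ N(A)`, the independent set `A \ N(T)` has
difference at most `d(A)`, forcing `|A ∩ N(T)| ≥ |T|`. So `N(A)` is matched into `A` and
`μ ≥ |N(A)|`. Conversely `α + μ ≤ n` in every graph, because each edge of a matching has an
endpoint outside a given independent set; with `n = |A| + |N(A)|` all three inequalities are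
equalities.
-/

open Function

section Extremal

variable [Finite V] (G : SimpleGraph V)

lemma bddAbove_ncard_isIndep : BddAbove {n | ∃ s : Set V, IsIndep G s ∧ s.ncard = n} :=
  bddAbove_def.mpr ⟨Nat.card V, fun _ ⟨s, _, h⟩ ↦ h ▸ Set.ncard_le_card s⟩

lemma bddAbove_ncard_isMatching :
    BddAbove {n | ∃ M : G.Subgraph, M.IsMatching ∧ M.edgeSet.ncard = n} :=
  bddAbove_def.mpr ⟨Nat.card (Sym2 V), fun _ ⟨_, _, h⟩ ↦ h ▸ Set.ncard_le_card _⟩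

lemma bddAbove_diffSet : BddAbove {d | ∃ I : Set V, IsIndep G I ∧ diffSet G I = d} :=
  ⟨Nat.card V, by
    rintro _ ⟨I, -, rfl⟩
    have := Set.ncard_le_card I
    unfold diffSet
    omega⟩

lemma exists_isIndep_ncard_eq_alphaNum : ∃ s : Set V, IsIndep G s ∧ s.ncard = alphaNum G := by
  refine Nat.sSup_mem ?_ (bddAbove_ncard_isIndep G)
  exact ⟨0, ∅, Set.pairwise_empty _, Set.ncard_empty V⟩

lemma exists_isMatching_ncard_eq_muNum :
    ∃ M : G.Subgraph, M.IsMatching ∧ M.edgeSet.ncard = muNum G := by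
  refine Nat.sSup_mem ?_ (bddAbove_ncard_isMatching G)
  exact ⟨0, ⊥, fun _ hv ↦ hv.elim, by simp⟩

variable {G}

lemma IsIndep.ncard_le_alphaNum {s : Set V} (hs : IsIndep G s) : s.ncard ≤ alphaNum G :=
  le_csSup (bddAbove_ncard_isIndep G) ⟨s, hs, rfl⟩

lemma SimpleGraph.Subgraph.IsMatching.ncard_edgeSet_le_muNum {M : G.Subgraph}
    (hM : M.IsMatching) : M.edgeSet.ncard ≤ muNum G :=
  le_csSup (bddAbove_ncard_isMatching G) ⟨M, hM, rfl⟩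

lemma IsIndep.diffSet_le_critDiff {I : Set V} (hI : IsIndep G I) : diffSet G I ≤ critDiff G :=
  le_csSup (bddAbove_diffSet G) ⟨I, hI, rfl⟩

end Extremal

lemma SimpleGraph.Subgraph.IsMatching.ncard_edgeSet_le_ncard_compl [Finite V]
    {G : SimpleGraph V} {M : G.Subgraph} (hM : M.IsMatching) {s : Set V} (hs : IsIndep G s) :
    M.edgeSet.ncard ≤ sᶜ.ncard := by
  rcases isEmpty_or_nonempty V with hV | hV
  · simp [Set.eq_empty_of_isEmpty M.edgeSet]
  have hout : ∀ e ∈ M.edgeSet, ∃ v ∈ e, v ∉ s := by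
    intro e he
    induction e with
    | _ a b =>
      have hab : G.Adj a b := M.adj_sub he
      by_cases ha : a ∈ s
      · exact ⟨b, Sym2.mem_mk_right a b, fun hb ↦ hs ha hb hab.ne hab⟩
      · exact ⟨a, Sym2.mem_mk_left a b, ha⟩
  choose! g hg_mem hg_out using hout
  refine Set.ncard_le_ncard_of_injOn g hg_out (fun e he e' he' hee' ↦ ?_)
  obtain ⟨w, hew⟩ := Sym2.mem_iff_exists.mp (hg_mem e he)
  obtain ⟨w', hew'⟩ := Sym2.mem_iff_exists.mp (hg_mem e' he')
  have hw : M.Adj (g e') w := by rw [← hee', ← Subgraph.mem_edgeSet, ← hew]; exact he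
  have hw' : M.Adj (g e') w' := by rw [← Subgraph.mem_edgeSet, ← hew']; exact he'
  rw [hew, hew', hee', hM.eq_of_adj_left hw hw']

lemma alphaNum_add_muNum_le [Finite V] (G : SimpleGraph V) :
    alphaNum G + muNum G ≤ Nat.card V := by
  obtain ⟨s, hs, hs_card⟩ := exists_isIndep_ncard_eq_alphaNum G
  obtain ⟨M, hM, hM_card⟩ := exists_isMatching_ncard_eq_muNum G
  rw [← hs_card, ← hM_card, ← Set.ncard_add_ncard_compl s]
  exact Nat.add_le_add_left (hM.ncard_edgeSet_le_ncard_compl hs) _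

/-- The edges `s(v, f v)` form a matching with `|S|` edges. -/
lemma ncard_le_muNum_of_injective [Finite V] {G : SimpleGraph V} {S : Set V} (f : S → V)
    (hf : Injective f) (hfS : ∀ v, f v ∉ S) (hadj : ∀ v : S, G.Adj v (f v)) :
    S.ncard ≤ muNum G := by
  have hM : (⨆ v : S, G.subgraphOfAdj (hadj v)).IsMatching := by
    refine Subgraph.IsMatching.iSup (fun v ↦ .subgraphOfAdj _) fun v w hvw ↦ ?_
    have hvw' : (v : V) ≠ w := Subtype.coe_ne_coe.mpr hvw
    have hvfw : (v : V) ≠ f w := fun h ↦ hfS w (h ▸ v.2)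
    have hfvw : f v ≠ w := fun h ↦ hfS v (h ▸ w.2)
    simp only [support_subgraphOfAdj, Set.disjoint_insert_left, Set.disjoint_singleton_left,
      Set.mem_insert_iff, Set.mem_singleton_iff, not_or]
    exact ⟨⟨hvw', hvfw⟩, hfvw, hf.ne hvw⟩
  have hinj : Injective fun v : S ↦ s((v : V), f v) := by
    intro v w hvw
    rcases Sym2.eq_iff.mp hvw with ⟨h, -⟩ | ⟨h, -⟩
    · exact Subtype.ext h
    · exact (hfS w (h ▸ v.2)).elim
  calc S.ncard = (Set.range fun v : S ↦ s((v : V), f v)).ncard := by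
        rw [Set.ncard_range_of_injective hinj, Nat.card_coe_set_eq]
    _ ≤ muNum G := by
        simpa [Subgraph.edgeSet_iSup, Set.range] using hM.ncard_edgeSet_le_muNum

lemma exists_injective_of_forall_ncard_le {ι α : Type*} [Finite α] {S : Set ι} (t : ι → Set α)
    (h : ∀ T ⊆ S, T.ncard ≤ (⋃ i ∈ T, t i).ncard) :
    ∃ f : S → α, Injective f ∧ ∀ i : S, f i ∈ t i := by
  classical
  have := Fintype.ofFinite α
  obtain ⟨f, hf, hft⟩ := (Finset.all_card_le_biUnion_card_iff_exists_injective
    fun i : S ↦ (t i).toFinset).mp fun T ↦ by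
      have hT := h (Subtype.val '' (T : Set S)) (by simp)
      rw [Set.ncard_image_of_injective _ Subtype.val_injective, Set.ncard_coe_finset] at hT
      convert hT using 1
      rw [← Set.ncard_coe_finset]
      congr 1
      ext
      simp
  exact ⟨f, hf, fun i ↦ Set.mem_toFinset.mp (hft i)⟩

lemma IsIndep.disjoint_nbhd {G : SimpleGraph V} {A : Set V} (hA : IsIndep G A) :
    Disjoint A (nbhd G A) :=
  Set.disjoint_left.mpr fun _ hv ⟨_, ha, hadj⟩ ↦ hA ha hv hadj.ne hadj

section Critical

variable [Finite V] {G : SimpleGraph V} {A : Set V}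

lemma IsCriticalIndep.ncard_le_ncard_inter_nbhd (hA : IsCriticalIndep G A) {T : Set V}
    (hT : T ⊆ nbhd G A) : T.ncard ≤ (A ∩ nbhd G T).ncard := by
  have hd : diffSet G (A \ nbhd G T) ≤ diffSet G A :=
    hA.2 ▸ IsIndep.diffSet_le_critDiff (hA.1.mono Set.sdiff_subset)
  have hsub : nbhd G (A \ nbhd G T) ⊆ nbhd G A \ T := by
    rintro v ⟨a, ⟨ha, haT⟩, hav⟩
    exact ⟨⟨a, ha, hav⟩, fun hv ↦ haT ⟨v, hv, hav.symm⟩⟩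
  have h₁ := Set.ncard_inter_add_ncard_sdiff_eq_ncard A (nbhd G T)
  have h₂ := Set.ncard_le_ncard hsub
  have h₃ := Set.ncard_sdiff_add_ncard_of_subset hT
  unfold diffSet at hd
  omega

lemma IsCriticalIndep.exists_injective (hA : IsCriticalIndep G A) :
    ∃ f : nbhd G A → V, Injective f ∧ ∀ v, f v ∈ A ∧ G.Adj v (f v) := by
  refine exists_injective_of_forall_ncard_le (fun v ↦ A ∩ G.neighborSet v) fun T hT ↦ ?_
  convert hA.ncard_le_ncard_inter_nbhd hT using 2
  ext a
  simp [nbhd, adj_comm]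

end Critical

lemma ncard_preimage_val {X s : Set V} (hs : s ⊆ X) : (Subtype.val ⁻¹' s : Set X).ncard = s.ncard :=
  Set.ncard_preimage_of_injective_subset_range Subtype.val_injective (by simpa)

lemma IsIndep.ncard_le_alphaNum_induce [Finite V] {G : SimpleGraph V} {A X : Set V}
    (hA : IsIndep G A) (hAX : A ⊆ X) : A.ncard ≤ alphaNum (G.induce X) := by
  have hA' : IsIndep (G.induce X) (Subtype.val ⁻¹' A) :=
    fun _ ha _ hb hab ↦ hA ha hb (Subtype.coe_ne_coe.mpr hab)
  exact ncard_preimage_val hAX ▸ hA'.ncard_le_alphaNum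

lemma IsCriticalIndep.ncard_nbhd_le_muNum_induce [Finite V] {G : SimpleGraph V} {A : Set V}
    (hA : IsCriticalIndep G A) : (nbhd G A).ncard ≤ muNum (G.induce (A ∪ nbhd G A)) := by
  obtain ⟨f, hf, hfA⟩ := hA.exists_injective
  let S : Set ↥(A ∪ nbhd G A) := Subtype.val ⁻¹' nbhd G A
  let g : S → ↥(A ∪ nbhd G A) := fun v ↦ ⟨f ⟨v, v.2⟩, .inl (hfA _).1⟩
  have hg : Injective g := fun v w hvw ↦ by
    simpa [g, hf.eq_iff, Subtype.ext_iff] using hvw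
  have hgS : ∀ v, g v ∉ S := fun v hv ↦ hA.1.disjoint_nbhd.notMem_of_mem_left (hfA _).1 hv
  have h := ncard_le_muNum_of_injective (G := G.induce _) g hg hgS fun v ↦ (hfA ⟨v, v.2⟩).2
  rwa [ncard_preimage_val Set.subset_union_right] at h

theorem stmt_5 [Fintype V] (G : SimpleGraph V) (A : Set V)
    (hA : IsCriticalIndep G A) :
    KonigEgervary (G.induce (A ∪ nbhd G A)) ∧
    alphaNum (G.induce (A ∪ nbhd G A)) = A.ncard ∧
    muNum (G.induce (A ∪ nbhd G A)) = (nbhd G A).ncard := by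
  have hcard : Nat.card ↥(A ∪ nbhd G A) = A.ncard + (nbhd G A).ncard := by
    rw [Nat.card_coe_set_eq, Set.ncard_union_eq hA.1.disjoint_nbhd]
  have hα := hA.1.ncard_le_alphaNum_induce (Set.subset_union_left (t := nbhd G A))
  have hμ := hA.ncard_nbhd_le_muNum_induce
  have hle := alphaNum_add_muNum_le (G.induce (A ∪ nbhd G A))
  unfold KonigEgervary
  omega
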